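/- The series Ψ(a,z) = ₁φ₁(a; 0; q², z) satisfies the three-term relation in a: (1−a)(z/q²)(Ψ(q²a,z) − Ψ(a,z)) − (az/q²)Ψ(a,z) + (Ψ(a/q²,z) − Ψ(a,z)) = 0. -/

import Mathlib

/-!
Both brackets of the relation reduce to multiples of `Ψ(a, q²z)`. Termwise, the
recursion `(1 - a) (q²a; q²)ₙ = (a; q²)ₙ (1 - a q²ⁿ)` gives
`(1 - a)(Ψ(q²a,z) - Ψ(a,z)) - aΨ(a,z) = -aΨ(a,q²z)`, while
`(a/q²; q²)ₙ₊₁ - (a; q²)ₙ₊₁ = -(a/q²)(1 - q²ⁿ⁺²)(a; q²)ₙ` and a shift of the summation index give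
`Ψ(a/q²,z) - Ψ(a,z) = (az/q²)Ψ(a,q²z)`. The relation is `z/q²` times the first identity plus the
second. All series converge because the ratio of consecutive terms tends to `0`.
-/

open scoped BigOperators

/-- The q-Pochhammer symbol (a;q)_n. -/
noncomputable def qPoch (a q : ℂ) (n : ℕ) : ℂ :=
  ∏ k ∈ Finset.range n, (1 - a * q ^ k)

/-- Ψ(a,z) = ₁φ₁(a; 0; q², z). -/
noncomputable def psi11 (q a z : ℂ) : ℂ :=
  ∑' n : ℕ, qPoch a (q ^ 2) n / qPoch (q ^ 2) (q ^ 2) n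
    * (-1) ^ n * q ^ (n * (n - 1)) * z ^ n

open Filter Topology

theorem summable_of_succ_eq_mul_of_tendsto_zero {R : Type*} [NormedRing R] [CompleteSpace R]
    {f ρ : ℕ → R} (hf : ∀ n, f (n + 1) = f n * ρ n) (hρ : Tendsto ρ atTop (𝓝 0)) :
    Summable f := by
  have hsmall : ∀ᶠ n in atTop, ‖ρ n‖ ≤ 1 / 2 :=
    (tendsto_zero_iff_norm_tendsto_zero.mp hρ).eventually (ge_mem_nhds (by norm_num))
  refine summable_of_ratio_norm_eventually_le (r := 1 / 2) (by norm_num) ?_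
  filter_upwards [hsmall] with n hn
  calc ‖f (n + 1)‖ ≤ ‖f n‖ * ‖ρ n‖ := hf n ▸ norm_mul_le _ _
    _ ≤ 1 / 2 * ‖f n‖ := by rw [mul_comm]; gcongr

section QPochhammer

variable (a q : ℂ) (n : ℕ)

theorem qPoch_succ : qPoch a q (n + 1) = qPoch a q n * (1 - a * q ^ n) :=
  Finset.prod_range_succ _ _

theorem qPoch_succ' : qPoch a q (n + 1) = (1 - a) * qPoch (a * q) q n := by
  simp only [qPoch, Finset.prod_range_succ', pow_zero, mul_one, pow_succ, mul_assoc,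
    mul_comm q]
  ring

theorem one_sub_mul_qPoch_mul : (1 - a) * qPoch (a * q) q n = qPoch a q n * (1 - a * q ^ n) := by
  rw [← qPoch_succ', qPoch_succ]

variable {a q} in
theorem qPoch_ne_zero (ha : ‖a‖ < 1) (hq : ‖q‖ ≤ 1) : qPoch a q n ≠ 0 := by
  refine Finset.prod_ne_zero_iff.mpr fun k _ => sub_ne_zero.mpr fun h => ?_
  have : ‖a * q ^ k‖ < 1 := by
    rw [norm_mul, norm_pow]
    exact mul_lt_one_of_nonneg_of_lt_one_left (norm_nonneg a) ha (pow_le_one₀ (norm_nonneg q) hq)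
  simp [← h] at this

end QPochhammer

theorem norm_sq_lt_one {q : ℂ} (hq : ‖q‖ < 1) : ‖q ^ 2‖ < 1 := by
  rw [norm_pow]
  exact pow_lt_one₀ (norm_nonneg q) hq two_ne_zero

noncomputable def psi11Term (q a z : ℂ) (n : ℕ) : ℂ :=
  qPoch a (q ^ 2) n / qPoch (q ^ 2) (q ^ 2) n * (-1) ^ n * q ^ (n * (n - 1)) * z ^ n

theorem psi11_eq_tsum (q a z : ℂ) : psi11 q a z = ∑' n, psi11Term q a z n := rfl

theorem psi11Term_zero (q a z : ℂ) : psi11Term q a z 0 = 1 := by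
  simp [psi11Term, qPoch]

theorem pow_succ_mul_self {M : Type*} [Monoid M] (q : M) (n : ℕ) :
    q ^ ((n + 1) * n) = q ^ (n * (n - 1)) * (q ^ 2) ^ n := by
  rw [← pow_mul, ← pow_add]
  congr 1
  cases n <;> simp only [Nat.add_sub_cancel]; ring

theorem psi11Term_succ (q a z : ℂ) (n : ℕ) :
    psi11Term q a z (n + 1) = psi11Term q a z n *
      ((1 - a * (q ^ 2) ^ n) / (1 - q ^ 2 * (q ^ 2) ^ n) * (-(q ^ 2) ^ n * z)) := by
  simp only [psi11Term, qPoch_succ, Nat.add_sub_cancel, pow_succ_mul_self, pow_succ,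
    div_eq_mul_inv, mul_inv]
  ring

theorem summable_psi11Term {q : ℂ} (hq : ‖q‖ < 1) (a z : ℂ) : Summable (psi11Term q a z) := by
  have hpow := tendsto_pow_atTop_nhds_zero_of_norm_lt_one (norm_sq_lt_one hq)
  refine summable_of_succ_eq_mul_of_tendsto_zero (psi11Term_succ q a z) ?_
  have hratio := (((tendsto_const_nhds (x := (1 : ℂ))).sub (hpow.const_mul a)).div
    ((tendsto_const_nhds (x := (1 : ℂ))).sub (hpow.const_mul (q ^ 2))) (by simp)).mul
    (hpow.neg.mul_const z)
  simpa using hratio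

theorem psi11Term_contiguous (q a z : ℂ) (n : ℕ) :
    (1 - a) * (psi11Term q (q ^ 2 * a) z n - psi11Term q a z n) - a * psi11Term q a z n
      = -a * psi11Term q a (q ^ 2 * z) n := by
  have hshift := one_sub_mul_qPoch_mul a (q ^ 2) n
  rw [mul_comm a (q ^ 2)] at hshift
  simp only [psi11Term, mul_pow]
  linear_combination ((-1) ^ n * q ^ (n * (n - 1)) * z ^ n / qPoch (q ^ 2) (q ^ 2) n) * hshift

theorem psi11Term_div_succ_sub {q : ℂ} (hq : ‖q‖ < 1) (hq0 : q ≠ 0) (a z : ℂ) (n : ℕ) :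
    psi11Term q (a / q ^ 2) z (n + 1) - psi11Term q a z (n + 1)
      = a * z / q ^ 2 * psi11Term q a (q ^ 2 * z) n := by
  have hD := qPoch_ne_zero (n + 1) (norm_sq_lt_one hq) (norm_sq_lt_one hq).le
  rw [qPoch_succ] at hD
  obtain ⟨hD, hfactor⟩ := mul_ne_zero_iff.mp hD
  simp only [psi11Term]
  rw [qPoch_succ' (a / q ^ 2), div_mul_cancel₀ a (pow_ne_zero 2 hq0)]
  simp only [qPoch_succ, Nat.add_sub_cancel, pow_succ_mul_self, pow_succ (-1 : ℂ), pow_succ z,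
    mul_pow (q ^ 2) z]
  field_simp
  ring

theorem psi11_contiguous {q : ℂ} (hq : ‖q‖ < 1) (a z : ℂ) :
    (1 - a) * (psi11 q (q ^ 2 * a) z - psi11 q a z) - a * psi11 q a z
      = -a * psi11 q a (q ^ 2 * z) := by
  have hsum := (((summable_psi11Term hq (q ^ 2 * a) z).hasSum.sub
    (summable_psi11Term hq a z).hasSum).mul_left (1 - a)).sub
    ((summable_psi11Term hq a z).hasSum.mul_left a)
  simp only [psi11Term_contiguous] at hsum
  simp only [psi11_eq_tsum]
  exact hsum.unique ((summable_psi11Term hq a (q ^ 2 * z)).hasSum.mul_left (-a))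

theorem psi11_div_sub {q : ℂ} (hq : ‖q‖ < 1) (hq0 : q ≠ 0) (a z : ℂ) :
    psi11 q (a / q ^ 2) z - psi11 q a z = a * z / q ^ 2 * psi11 q a (q ^ 2 * z) := by
  have hsum := (summable_psi11Term hq (a / q ^ 2) z).hasSum.sub (summable_psi11Term hq a z).hasSum
  rw [← hasSum_nat_add_iff' 1] at hsum
  simp only [psi11Term_div_succ_sub hq hq0, Finset.sum_range_one, psi11Term_zero, sub_self,
    sub_zero] at hsum
  simp only [psi11_eq_tsum]
  exact hsum.unique ((summable_psi11Term hq a (q ^ 2 * z)).hasSum.mul_left _)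

/-- Three-term relation in a for Ψ(a,z) = ₁φ₁(a;0;q²,z):
(1−a)(z/q²)(Ψ(q²a,z) − Ψ(a,z)) − (az/q²)Ψ(a,z) + (Ψ(a/q²,z) − Ψ(a,z)) = 0. -/
theorem psi11_three_term (q a z : ℂ) (hq : ‖q‖ < 1) (hq0 : q ≠ 0) :
    (1 - a) * (z / q ^ 2) * (psi11 q (q ^ 2 * a) z - psi11 q a z)
      - (a * z / q ^ 2) * psi11 q a z
      + (psi11 q (a / q ^ 2) z - psi11 q a z) = 0 := by
  linear_combination z / q ^ 2 * psi11_contiguous hq a z + psi11_div_sub hq hq0 a z
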